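/- arXiv:2601.05335 — 2 statements merged into one kernel-verified Lean document; each statement's English description precedes it below -/
import Mathlib

section
/- Let X be an N-way real tensor of size I_1 × ⋯ × I_N that is symmetric with respect to a partition of its modes encoded by a cell map σ : {1,…,N} → {1,…,K} with cell dimensions Ĩ_1,…,Ĩ_K satisfying I_n = Ĩ_{σ(n)}. Let λ ∈ ℝ^r, let A_k ∈ ℝ^{Ĩ_k × r} for k ∈ {1,…,K}, let M be the symmetric Kruskal tensor with entries m_i = ∑_{j=1}^r λ_j ∏_{n=1}^N (A_{σ(n)})_{i_n, j}, let ℓ : ℝ × ℝ → ℝ be such that for every x ∈ ℝ the map m ↦ ℓ(x, m) is differentiable on ℝ with derivative ∂ℓ/∂m(x, m), and define F(λ, A_1,…,A_K) = ∑_i ℓ(x_i, m_i). Then for every k ∈ {1,…,K}, every mode k' with σ(k') = k, every a ∈ {1,…,Ĩ_k}, and every b ∈ {1,…,r}, the partial derivative of F with respect to the (a,b) entry of A_k exists and equals |I_k| · ∑_{i : i_{k'} = a} y_i · λ_b · ∏_{n ≠ k'} (A_{σ(n)})_{i_n, b}, where |I_k| is the number of modes t with σ(t) = k, y_i = ∂ℓ/∂m(x_i,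 m_i), and the sum runs over all multi-indices i whose k'-th coordinate equals a. -/
open Finset

/-! The (a, b) entry of `A_k` occurs in `m_i` once for every mode `n` of cell `k` with
`i_n = a`, so by the product and chain rules the derivative of `F` is
`∑_{n ∈ I_k} ∑_{i : i_n = a} y_i λ_b ∏_{m ≠ n} (A_{σ(m)})_{i_m, b}`.
The transposition of `n` and `k'` is cell-preserving, so reindexing multi-indices along it
fixes `X` and the Kruskal tensor, hence `y`, and turns the `n`-th inner sum into the
`k'`-th one: all `|I_k|` inner sums are equal. -/

theorem apply_eq_apply_of_val_eq {κ α : Type*} {d : κ → ℕ} (f : (k : κ) → Fin (d k) → α)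
    {p q : κ} (hpq : p = q) {x : Fin (d p)} {y : Fin (d q)} (hxy : (x : ℕ) = y) :
    f p x = f q y := by
  subst hpq
  rw [Fin.ext hxy]

theorem update_entry_apply {κ β γ : Type*} [DecidableEq κ] [DecidableEq β] {d : κ → ℕ}
    (A : (k : κ) → Fin (d k) → β → γ) (k : κ) (a : Fin (d k)) (b : β) (t : γ)
    (p : κ) (x : Fin (d p)) (j : β) :
    Function.update A k (fun a' b' => if a' = a ∧ b' = b then t else A k a' b') p x j =
      if (p = k ∧ (x : ℕ) = a) ∧ j = b then t else A p x j := by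
  by_cases h : p = k
  · subst h
    simp [Fin.ext_iff]
  · simp [h]

theorem update_entry_self {κ β γ : Type*} [DecidableEq κ] [DecidableEq β] {d : κ → ℕ}
    (A : (k : κ) → Fin (d k) → β → γ) (k : κ) (a : Fin (d k)) (b : β) :
    Function.update A k (fun a' b' => if a' = a ∧ b' = b then A k a b else A k a' b') = A := by
  refine Function.update_eq_self_iff.mpr (funext fun a' => funext fun b' => ?_)
  split_ifs with h
  · rw [h.1, h.2]
  · rfl

section Derivatives

variable {𝕜 ι : Type*} [NontriviallyNormedField 𝕜] [Fintype ι] [DecidableEq ι]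

theorem hasDerivAt_prod_ite (p : ι → Prop) [DecidablePred p] (c : ι → 𝕜) {t₀ : 𝕜}
    (hc : ∀ n, p n → c n = t₀) :
    HasDerivAt (fun t => ∏ n, if p n then t else c n)
      (∑ n ∈ univ.filter p, ∏ m ∈ univ.erase n, c m) t₀ := by
  have hfactor : ∀ n ∈ (univ : Finset ι),
      HasDerivAt (fun t => if p n then t else c n) (if p n then 1 else 0) t₀ := by
    intro n _
    split_ifs
    exacts [hasDerivAt_id t₀, hasDerivAt_const t₀ _]
  have hvalue : ∀ m, (if p m then t₀ else c m) = c m := fun m => by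
    split_ifs with hm
    exacts [(hc m hm).symm, rfl]
  refine (HasDerivAt.fun_finsetProd hfactor).congr_deriv ?_
  simp only [hvalue, smul_eq_mul, mul_ite, mul_one, mul_zero, sum_filter]

theorem hasDerivAt_sum_mul_prod_ite {β : Type*} [Fintype β] [DecidableEq β] (w : β → 𝕜)
    (p : ι → Prop) [DecidablePred p] (c : ι → β → 𝕜) (b : β) {t₀ : 𝕜}
    (hc : ∀ n, p n → c n b = t₀) :
    HasDerivAt (fun t => ∑ j, w j * ∏ n, if p n ∧ j = b then t else c n j)
      (w b * ∑ n ∈ univ.filter p, ∏ m ∈ univ.erase n, c m b) t₀ := by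
  have hterm := fun j (_ : j ∈ (univ : Finset β)) =>
    (hasDerivAt_prod_ite (fun n => p n ∧ j = b) (fun n => c n j)
      (by rintro n ⟨hn, rfl⟩; exact hc n hn)).const_mul (w j)
  refine (HasDerivAt.fun_sum hterm).congr_deriv ?_
  rw [sum_eq_single b (fun j _ hj => by simp [hj]) (by simp)]
  simp

theorem hasDerivAt_sum_loss {α E : Type*} (s : Finset α) (ℓ dℓ : E → 𝕜 → 𝕜)
    (hℓ : ∀ x m, HasDerivAt (fun z => ℓ x z) (dℓ x m) m) (x : α → E)
    {g : α → 𝕜 → 𝕜} {g' : α → 𝕜} {t₀ : 𝕜} (hg : ∀ i, HasDerivAt (g i) (g' i) t₀) :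
    HasDerivAt (fun t => ∑ i ∈ s, ℓ (x i) (g i t)) (∑ i ∈ s, dℓ (x i) (g i t₀) * g' i) t₀ :=
  HasDerivAt.fun_sum fun i _ => (hℓ (x i) (g i t₀)).comp t₀ (hg i)

end Derivatives

def kruskalEntry {ι κ β R : Type*} [Fintype ι] [Fintype β] [CommSemiring R] {d : κ → ℕ}
    (σ : ι → κ) (lam : β → R) (A : (k : κ) → Fin (d k) → β → R)
    (i : (n : ι) → Fin (d (σ n))) : R :=
  ∑ j, lam j * ∏ n, A (σ n) (i n) j

section CellSymmetry

variable {ι κ : Type*} (σ : ι → κ) (d : κ → ℕ)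

def permuteIndex (π : Equiv.Perm ι) (hπ : ∀ n, σ (π n) = σ n)
    (i : (n : ι) → Fin (d (σ n))) : (n : ι) → Fin (d (σ n)) :=
  fun n => Fin.cast (congrArg d (hπ n)) (i (π n))

variable {σ d}

theorem swap_cellPreserving [DecidableEq ι] {n n' : ι} (h : σ n = σ n') (m : ι) :
    σ (Equiv.swap n n' m) = σ m := by
  rcases eq_or_ne m n with rfl | h₁
  · simp [h]
  rcases eq_or_ne m n' with rfl | h₂
  · simp [h]
  rw [Equiv.swap_apply_of_ne_of_ne h₁ h₂]

theorem permuteIndex_swap_involutive [DecidableEq ι] {n n' : ι} (h : σ n = σ n') :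
    Function.Involutive (permuteIndex σ d (Equiv.swap n n') (swap_cellPreserving h)) :=
  fun i => funext fun m => Fin.ext (by
    simp only [permuteIndex, Fin.val_cast]
    rw [Equiv.swap_apply_self])

theorem prod_permuteIndex {M : Type*} [CommMonoid M] (A : (k : κ) → Fin (d k) → M)
    (π : Equiv.Perm ι) (hπ : ∀ n, σ (π n) = σ n) (i : (n : ι) → Fin (d (σ n)))
    (s : Finset ι) :
    ∏ n ∈ s, A (σ n) (permuteIndex σ d π hπ i n) = ∏ n ∈ s.map π.toEmbedding, A (σ n) (i n) := by
  rw [prod_map]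
  exact prod_congr rfl fun n _ => apply_eq_apply_of_val_eq A (hπ n).symm rfl

theorem kruskalEntry_permuteIndex {β R : Type*} [Fintype ι] [Fintype β] [CommSemiring R]
    (lam : β → R) (A : (k : κ) → Fin (d k) → β → R) (π : Equiv.Perm ι)
    (hπ : ∀ n, σ (π n) = σ n) (i : (n : ι) → Fin (d (σ n))) :
    kruskalEntry σ lam A (permuteIndex σ d π hπ i) = kruskalEntry σ lam A i := by
  refine sum_congr rfl fun j _ => congrArg (lam j * ·) ?_
  rw [prod_permuteIndex (A · · j), map_univ_equiv]

theorem sum_filter_coord_mul_prod_erase_eq_of_cell_eq [Fintype ι] [DecidableEq ι]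
    {R : Type*} [CommSemiring R] (Y : ((n : ι) → Fin (d (σ n))) → R)
    (hY : ∀ π hπ i, Y (permuteIndex σ d π hπ i) = Y i) (A : (k : κ) → Fin (d k) → R)
    {n n' : ι} (h : σ n = σ n') (a : ℕ) :
    ∑ i ∈ univ.filter (fun i : (m : ι) → Fin (d (σ m)) => (i n : ℕ) = a),
        Y i * ∏ m ∈ univ.erase n, A (σ m) (i m) =
      ∑ i ∈ univ.filter (fun i : (m : ι) → Fin (d (σ m)) => (i n' : ℕ) = a),
        Y i * ∏ m ∈ univ.erase n', A (σ m) (i m) := by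
  set e := permuteIndex σ d (Equiv.swap n n') (swap_cellPreserving h)
  have he := permuteIndex_swap_involutive (d := d) h
  refine sum_nbij' e e (fun i hi => ?_) (fun i hi => ?_) (fun i _ => he i) (fun i _ => he i)
    (fun i _ => ?_)
  · simp only [mem_filter, mem_univ, true_and, e, permuteIndex, Fin.val_cast] at hi ⊢
    rwa [Equiv.swap_apply_right]
  · simp only [mem_filter, mem_univ, true_and, e, permuteIndex, Fin.val_cast] at hi ⊢
    rwa [Equiv.swap_apply_left]
  · rw [hY, prod_permuteIndex, map_erase]
    simp

theorem sum_mul_sum_cell_eq_card_mul [Fintype ι] [DecidableEq ι] [DecidableEq κ]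
    {R : Type*} [CommSemiring R] (Y : ((n : ι) → Fin (d (σ n))) → R)
    (hY : ∀ π hπ i, Y (permuteIndex σ d π hπ i) = Y i) (A : (k : κ) → Fin (d k) → R)
    (n' : ι) (a : ℕ) :
    ∑ i, Y i * ∑ n ∈ univ.filter (fun n => σ n = σ n' ∧ (i n : ℕ) = a),
        ∏ m ∈ univ.erase n, A (σ m) (i m) =
      ((univ.filter (fun n => σ n = σ n')).card : R) *
        ∑ i ∈ univ.filter (fun i : (m : ι) → Fin (d (σ m)) => (i n' : ℕ) = a),
          Y i * ∏ m ∈ univ.erase n', A (σ m) (i m) := by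
  rw [← nsmul_eq_mul, ← sum_const]
  simp_rw [mul_sum]
  rw [sum_comm' (t' := univ.filter (fun n => σ n = σ n'))
    (s' := fun n => univ.filter (fun i : (m : ι) → Fin (d (σ m)) => (i n : ℕ) = a))
    (by simp [and_comm])]
  refine sum_congr rfl fun n hn => ?_
  exact sum_filter_coord_mul_prod_erase_eq_of_cell_eq Y hY A (mem_filter.mp hn).2 a

end CellSymmetry

/-- **SymGCP gradients for symmetric data.**
If the data tensor `X` is symmetric with respect to the partition encoded by the cell map
`σ`, then the partial derivative of the SymGCP objective with respect to the `(a,b)` entry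
of the factor matrix `A_k` exists and equals
`|I_k| · ∑_{i : i_{k'} = a} y_i · λ_b · ∏_{n ≠ k'} (A_{σ(n)})_{i_n, b}`,
where `k'` is any mode in cell `k` and `y_i = ∂ℓ/∂m (x_i, m_i)`. -/
theorem symgcp_gradient_factor_symmetric_data
    (N K r : ℕ) (σ : Fin N → Fin K) (Itil : Fin K → ℕ)
    (X : ((n : Fin N) → Fin (Itil (σ n))) → ℝ)
    (hX : ∀ (π : Equiv.Perm (Fin N)) (hπ : ∀ n, σ (π n) = σ n)
        (i : (n : Fin N) → Fin (Itil (σ n))),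
        X (fun n => Fin.cast (congrArg Itil (hπ n)) (i (π n))) = X i)
    (lam : Fin r → ℝ) (A : (k : Fin K) → Fin (Itil k) → Fin r → ℝ)
    (ℓ : ℝ → ℝ → ℝ) (dℓ : ℝ → ℝ → ℝ)
    (hℓ : ∀ x m : ℝ, HasDerivAt (fun z => ℓ x z) (dℓ x m) m)
    (k : Fin K) (k' : Fin N) (hk' : σ k' = k) (a : Fin (Itil k)) (b : Fin r) :
    HasDerivAt
      (fun t : ℝ => ∑ i : (n : Fin N) → Fin (Itil (σ n)),
        ℓ (X i) (∑ j : Fin r, lam j *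
          ∏ n : Fin N,
            (Function.update A k (fun a' b' => if a' = a ∧ b' = b then t else A k a' b'))
              (σ n) (i n) j))
      (((Finset.univ.filter (fun t : Fin N => σ t = k)).card : ℝ) *
        ∑ i ∈ Finset.univ.filter
            (fun i : (n : Fin N) → Fin (Itil (σ n)) => ((i k' : ℕ) = (a : ℕ))),
          dℓ (X i) (∑ j : Fin r, lam j * ∏ n : Fin N, A (σ n) (i n) j) *
            (lam b * ∏ n ∈ Finset.univ.erase k', A (σ n) (i n) b))
      (A k a b) := by
  subst hk'
  have hkruskal : ∀ i : (n : Fin N) → Fin (Itil (σ n)), HasDerivAt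
      (fun t => ∑ j, lam j * ∏ n, Function.update A (σ k')
        (fun a' b' => if a' = a ∧ b' = b then t else A (σ k') a' b') (σ n) (i n) j)
      (lam b * ∑ n ∈ univ.filter (fun n => σ n = σ k' ∧ (i n : ℕ) = a),
        ∏ m ∈ univ.erase n, A (σ m) (i m) b) (A (σ k') a b) := fun i => by
    simp only [update_entry_apply]
    exact hasDerivAt_sum_mul_prod_ite lam _ (fun n j => A (σ n) (i n) j) b
      fun n hn => apply_eq_apply_of_val_eq (A · · b) hn.1 hn.2
  have hsymm : ∀ π hπ i, dℓ (X (permuteIndex σ Itil π hπ i))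
      (kruskalEntry σ lam A (permuteIndex σ Itil π hπ i)) * lam b =
        dℓ (X i) (kruskalEntry σ lam A i) * lam b := fun π hπ i => by
    rw [kruskalEntry_permuteIndex]
    exact congrArg (dℓ · _ * lam b) (hX π hπ i)
  refine (hasDerivAt_sum_loss univ ℓ dℓ hℓ X hkruskal).congr_deriv ?_
  simp only [update_entry_self, ← mul_assoc]
  exact sum_mul_sum_cell_eq_card_mul _ hsymm (A · · b) k' a
end

section
/- Let X be an N-way real tensor of size I_1 × ⋯ × I_N, let λ ∈ ℝ^r and A_n ∈ ℝ^{I_n × r} for each mode n ∈ {1,…,N} (with no tying between modes), and let M be the Kruskal tensor with entries m_i = ∑_{j=1}^r λ_j ∏_{n=1}^N (A_n)_{i_n, j}. Let ℓ : ℝ × ℝ → ℝ be such that for every x ∈ ℝ the map m ↦ ℓ(x, m) is differentiable on ℝ with derivative ∂ℓ/∂m(x, m), and define G(λ, A_1,…,A_N) = ∑_i ℓ(x_i, m_i). Then: (1) for every b ∈ {1,…,r}, the partial derivative of G with respect to λ_b exists and equals ∑_i y_i ∏_{n=1}^N (A_n)_{i_n, b}; and (2) for every mode k ∈ {1,…,N},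 every a ∈ {1,…,I_k}, and every b ∈ {1,…,r}, the partial derivative of G with respect to the (a,b) entry of A_k exists and equals ∑_{i : i_k = a} y_i · λ_b · ∏_{n ≠ k} (A_n)_{i_n, b}, where y_i = ∂ℓ/∂m(x_i, m_i). -/
open Finset

/-! Each model entry `m_i` is affine in any single parameter, so every partial derivative of
`G` is the chain rule applied entrywise and summed over `i`; an entry `(a, b)` of `A_k` only
enters the `m_i` with `i_k = a`, which produces the restricted sum. -/

theorem HasDerivAt.sum_comp_loss {ι : Type*} [Fintype ι] {ℓ dℓ : ℝ → ℝ → ℝ}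
    (hℓ : ∀ x m : ℝ, HasDerivAt (fun z => ℓ x z) (dℓ x m) m) (X : ι → ℝ)
    {m : ι → ℝ → ℝ} {m' : ι → ℝ} {t₀ : ℝ} (hm : ∀ i, HasDerivAt (m i) (m' i) t₀) :
    HasDerivAt (fun t => ∑ i, ℓ (X i) (m i t)) (∑ i, dℓ (X i) (m i t₀) * m' i) t₀ :=
  HasDerivAt.fun_sum fun i _ => (hℓ (X i) (m i t₀)).comp t₀ (hm i)

theorem hasDerivAt_sum_update_mul {ρ : Type*} [Fintype ρ] [DecidableEq ρ]
    (v c : ρ → ℝ) (b : ρ) (x : ℝ) :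
    HasDerivAt (fun t => ∑ j, Function.update v b t j * c j) (c b) x := by
  have hupd : ∀ j, HasDerivAt (fun t => Function.update v b t j) ((Pi.single b 1 : ρ → ℝ) j) x :=
    hasDerivAt_pi.mp (hasDerivAt_update v b x)
  simpa [Pi.single_apply] using HasDerivAt.fun_sum (u := univ) fun j _ => (hupd j).mul_const (c j)

section FactorEntry

variable {ι ρ : Type*} [DecidableEq ι] [DecidableEq ρ] {κ : ι → Type*} [∀ n, DecidableEq (κ n)]
  (A : (n : ι) → κ n → ρ → ℝ) (k : ι) (a : κ k) (b : ρ)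

section Fintype

variable [Fintype ι]

theorem prod_update_factor_entry_of_ne {i : (n : ι) → κ n} (hi : i k ≠ a) (t : ℝ) (j : ρ) :
    ∏ n, Function.update A k (fun a' b' => if a' = a ∧ b' = b then t else A k a' b') n (i n) j
      = ∏ n, A n (i n) j := by
  refine prod_congr rfl fun n _ => ?_
  rcases eq_or_ne n k with rfl | hn
  · simp [hi]
  · rw [Function.update_of_ne hn]

theorem prod_update_factor_entry_of_eq {i : (n : ι) → κ n} (hi : i k = a) (t : ℝ) (j : ρ) :
    ∏ n, Function.update A k (fun a' b' => if a' = a ∧ b' = b then t else A k a' b') n (i n) j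
      = Function.update (A k a) b t j * ∏ n ∈ univ.erase k, A n (i n) j := by
  rw [← mul_prod_erase _ _ (mem_univ k)]
  congr 1
  · subst hi
    simp [Function.update_apply]
  · exact prod_congr rfl fun n hn => by rw [Function.update_of_ne (ne_of_mem_erase hn)]

theorem hasDerivAt_kruskal_entry_factor [Fintype ρ] (lam : ρ → ℝ) (i : (n : ι) → κ n) (x : ℝ) :
    HasDerivAt
      (fun t => ∑ j, lam j *
        ∏ n, Function.update A k (fun a' b' => if a' = a ∧ b' = b then t else A k a' b') n (i n) j)
      (if i k = a then lam b * ∏ n ∈ univ.erase k, A n (i n) b else 0) x := by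
  by_cases hi : i k = a
  · simp only [prod_update_factor_entry_of_eq A k a b hi, hi, if_true, mul_left_comm (lam _)]
    exact hasDerivAt_sum_update_mul (A k a) (fun j => lam j * ∏ n ∈ univ.erase k, A n (i n) j) b x
  · simp only [prod_update_factor_entry_of_ne A k a b hi, hi, if_false]
    exact hasDerivAt_const x _

end Fintype

theorem update_factor_entry_self :
    Function.update A k (fun a' b' => if a' = a ∧ b' = b then A k a b else A k a' b') = A := by
  convert Function.update_eq_self k A using 2
  ext a' b'
  split_ifs with h
  · rw [h.1, h.2]
  · rfl

end FactorEntry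

/-- **Nonsymmetric GCP gradients.**
For the GCP objective `G(λ, A_1,…,A_N) = ∑_i ℓ(x_i, m_i)` with the (nonsymmetric)
Kruskal model `m_i = ∑_j λ_j ∏_n (A_n)_{i_n, j}`:
(1) the partial derivative with respect to `λ_b` exists and equals
`∑_i y_i ∏_n (A_n)_{i_n, b}`; and
(2) the partial derivative with respect to the `(a,b)` entry of `A_k` exists and equals
`∑_{i : i_k = a} y_i · λ_b · ∏_{n ≠ k} (A_n)_{i_n, b}`,
where `y_i = ∂ℓ/∂m (x_i, m_i)`. -/
theorem gcp_gradients
    (N r : ℕ) (Ilen : Fin N → ℕ)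
    (X : ((n : Fin N) → Fin (Ilen n)) → ℝ)
    (lam : Fin r → ℝ) (A : (n : Fin N) → Fin (Ilen n) → Fin r → ℝ)
    (ℓ : ℝ → ℝ → ℝ) (dℓ : ℝ → ℝ → ℝ)
    (hℓ : ∀ x m : ℝ, HasDerivAt (fun z => ℓ x z) (dℓ x m) m) :
    (∀ b : Fin r,
      HasDerivAt
        (fun t : ℝ => ∑ i : (n : Fin N) → Fin (Ilen n),
          ℓ (X i) (∑ j : Fin r, Function.update lam b t j * ∏ n : Fin N, A n (i n) j))
        (∑ i : (n : Fin N) → Fin (Ilen n),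
          dℓ (X i) (∑ j : Fin r, lam j * ∏ n : Fin N, A n (i n) j) *
            ∏ n : Fin N, A n (i n) b)
        (lam b))
    ∧ (∀ (k : Fin N) (a : Fin (Ilen k)) (b : Fin r),
      HasDerivAt
        (fun t : ℝ => ∑ i : (n : Fin N) → Fin (Ilen n),
          ℓ (X i) (∑ j : Fin r, lam j *
            ∏ n : Fin N,
              (Function.update A k (fun a' b' => if a' = a ∧ b' = b then t else A k a' b'))
                n (i n) j))
        (∑ i ∈ Finset.univ.filter (fun i : (n : Fin N) → Fin (Ilen n) => i k = a),
          dℓ (X i) (∑ j : Fin r, lam j * ∏ n : Fin N, A n (i n) j) *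
            (lam b * ∏ n ∈ Finset.univ.erase k, A n (i n) b))
        (A k a b)) := by
  refine ⟨fun b => ?_, fun k a b => ?_⟩
  · simpa only [Function.update_eq_self] using
      HasDerivAt.sum_comp_loss hℓ X fun i => hasDerivAt_sum_update_mul lam _ b (lam b)
  · simpa only [update_factor_entry_self, mul_ite, mul_zero, ← sum_filter] using
      HasDerivAt.sum_comp_loss hℓ X fun i => hasDerivAt_kruskal_entry_factor A k a b lam i (A k a b)
end
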